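/- Let V be a horizontal subgroup of H^n with complementary orthogonal subgroup W, and let Φ(v) = v·φ(v) be the graph map of φ : V → W. Suppose Φ is (1+η)-Lipschitz with respect to the Korányi metric for some 0 < η ≤ 1. Then φ is intrinsic Lipschitz with intrinsic Lipschitz constant at most 6·η^{1/4}, i.e. ‖P_W(Φ(v')^{-1}·Φ(v))‖ ≤ 6·η^{1/4}·‖P_V(Φ(v')^{-1}·Φ(v))‖ for all v, v' ∈ V. -/

import Mathlib

open scoped BigOperators

noncomputable section

/-- Points of the Heisenberg group ℍⁿ : pairs (z,t) with z ∈ ℝ^{2n}, t ∈ ℝ. -/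
abbrev Hpt (n : ℕ) := (EuclideanSpace ℝ (Fin (2 * n))) × ℝ

/-- The symplectic-type form ω(z,z') = (1/2) ∑ (z_i z'_{n+i} − z_{n+i} z'_i). -/
def omegaH (n : ℕ) (z z' : EuclideanSpace ℝ (Fin (2 * n))) : ℝ :=
  (1 / 2) * ∑ i : Fin n,
    (z ⟨i.1, by have := i.isLt; omega⟩ * z' ⟨n + i.1, by have := i.isLt; omega⟩ -
      z ⟨n + i.1, by have := i.isLt; omega⟩ * z' ⟨i.1, by have := i.isLt; omega⟩)

/-- Heisenberg group multiplication. -/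
def hMul {n : ℕ} (x y : Hpt n) : Hpt n :=
  (x.1 + y.1, x.2 + y.2 + omegaH n x.1 y.1)

/-- Heisenberg group inverse. -/
def hInv {n : ℕ} (x : Hpt n) : Hpt n := (-x.1, -x.2)

/-- Korányi norm ‖(z,t)‖ = (|z|⁴ + 16 t²)^{1/4}. -/
def kNorm {n : ℕ} (x : Hpt n) : ℝ := (‖x.1‖ ^ 4 + 16 * x.2 ^ 2) ^ ((1 : ℝ) / 4)

/-- Korányi distance d(x,y) = ‖y⁻¹ · x‖. -/
def kDist {n : ℕ} (x y : Hpt n) : ℝ := kNorm (hMul (hInv y) x)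

/-- A subspace of ℝ^{2n} is isotropic if ω vanishes on it. -/
def IsIsotropic (n : ℕ) (K : Submodule ℝ (EuclideanSpace ℝ (Fin (2 * n)))) : Prop :=
  ∀ z ∈ K, ∀ z' ∈ K, omegaH n z z' = 0

/-- Horizontal projection onto the horizontal subgroup V = K × {0}. -/
def PV {n : ℕ} (K : Submodule ℝ (EuclideanSpace ℝ (Fin (2 * n)))) (x : Hpt n) : Hpt n :=
  ((K.orthogonalProjection x.1 : EuclideanSpace ℝ (Fin (2 * n))), 0)

/-- Complementary vertical projection P_W(y) = (P_V y)⁻¹ · y. -/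
def PW {n : ℕ} (K : Submodule ℝ (EuclideanSpace ℝ (Fin (2 * n)))) (x : Hpt n) : Hpt n :=
  hMul (hInv (PV K x)) x

/-- Membership in the horizontal subgroup V = K × {0}. -/
def MemV {n : ℕ} (K : Submodule ℝ (EuclideanSpace ℝ (Fin (2 * n)))) (x : Hpt n) : Prop :=
  x.1 ∈ K ∧ x.2 = 0


/-! ### Auxiliary lemmas -/

lemma omega_self (n : ℕ) (z : EuclideanSpace ℝ (Fin (2*n))) : omegaH n z z = 0 := by
  simp only [omegaH, mul_eq_zero]
  right
  exact Finset.sum_eq_zero fun i _ => by ring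

lemma omega_add_right (n : ℕ) (z a b : EuclideanSpace ℝ (Fin (2*n))) :
    omegaH n z (a + b) = omegaH n z a + omegaH n z b := by
  simp only [omegaH, PiLp.add_apply, ← mul_add, ← Finset.sum_add_distrib]
  congr 1
  apply Finset.sum_congr rfl
  intros; ring

lemma omega_smul_left (n : ℕ) (c : ℝ) (z z' : EuclideanSpace ℝ (Fin (2*n))) :
    omegaH n (c • z) z' = c * omegaH n z z' := by
  simp only [omegaH, PiLp.smul_apply, smul_eq_mul]
  rw [mul_left_comm c, Finset.mul_sum, Finset.mul_sum, Finset.mul_sum]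
  apply Finset.sum_congr rfl
  intros; ring

lemma omega_neg_left (n : ℕ) (z z' : EuclideanSpace ℝ (Fin (2*n))) :
    omegaH n (-z) z' = - omegaH n z z' := by
  have := omega_smul_left n (-1) z z'
  simpa using this

lemma omega_zero_left (n : ℕ) (z' : EuclideanSpace ℝ (Fin (2*n))) : omegaH n 0 z' = 0 := by
  simp [omegaH]

lemma omega_zero_right (n : ℕ) (z : EuclideanSpace ℝ (Fin (2*n))) : omegaH n z 0 = 0 := by
  simp [omegaH]

lemma norm_sq_eq_sum (m : ℕ) (z : EuclideanSpace ℝ (Fin m)) : ‖z‖^2 = ∑ j, (z j)^2 := by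
  rw [EuclideanSpace.norm_eq, Real.sq_sqrt (by positivity)]
  simp [sq_abs]

lemma sum_comp_le (m k : ℕ) (f : Fin k → Fin m) (hf : Function.Injective f)
    (g : Fin m → ℝ) (hg : ∀ j, 0 ≤ g j) :
    ∑ i, g (f i) ≤ ∑ j, g j := by
  rw [← Finset.sum_image (fun a _ b _ h => hf h)]
  exact Finset.sum_le_sum_of_subset_of_nonneg (Finset.subset_univ _) (fun j _ _ => hg j)

def loE (n : ℕ) (i : Fin n) : Fin (2*n) := ⟨i.1, by have := i.isLt; omega⟩
def hiE (n : ℕ) (i : Fin n) : Fin (2*n) := ⟨n + i.1, by have := i.isLt; omega⟩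

lemma loE_inj (n : ℕ) : Function.Injective (loE n) := by
  intro a b h; simp [loE, Fin.ext_iff] at h; exact Fin.ext h
lemma hiE_inj (n : ℕ) : Function.Injective (hiE n) := by
  intro a b h; simp [hiE, Fin.ext_iff] at h; exact Fin.ext h

lemma omega_abs_le (n : ℕ) (z z' : EuclideanSpace ℝ (Fin (2*n))) :
    |omegaH n z z'| ≤ (1/2) * (‖z‖^2 + ‖z'‖^2) := by
  have h1 : |omegaH n z z'| = (1/2) * |∑ i : Fin n,
      (z (loE n i) * z' (hiE n i) - z (hiE n i) * z' (loE n i))| := by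
    rw [omegaH, abs_mul, abs_of_nonneg (by norm_num : (0:ℝ) ≤ 1/2)]
    rfl
  rw [h1]
  have h2 : |∑ i : Fin n, (z (loE n i) * z' (hiE n i) - z (hiE n i) * z' (loE n i))|
      ≤ ∑ i : Fin n, ((z (loE n i))^2/2 + (z' (hiE n i))^2/2 + (z (hiE n i))^2/2 + (z' (loE n i))^2/2) := by
    refine (Finset.abs_sum_le_sum_abs _ _).trans (Finset.sum_le_sum ?_)
    intro i _
    rw [abs_le]
    constructor <;> nlinarith [sq_nonneg (z (loE n i) + z' (hiE n i)), sq_nonneg (z (loE n i) - z' (hiE n i)),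
      sq_nonneg (z (hiE n i) + z' (loE n i)), sq_nonneg (z (hiE n i) - z' (loE n i))]
  have h3 : ∑ i : Fin n, ((z (loE n i))^2/2 + (z' (hiE n i))^2/2 + (z (hiE n i))^2/2 + (z' (loE n i))^2/2)
      ≤ ‖z‖^2 + ‖z'‖^2 := by
    have e : ∑ i : Fin n, ((z (loE n i))^2/2 + (z' (hiE n i))^2/2 + (z (hiE n i))^2/2 + (z' (loE n i))^2/2)
        = (∑ i, (z (loE n i))^2)/2 + (∑ i, (z' (hiE n i))^2)/2 + (∑ i, (z (hiE n i))^2)/2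
          + (∑ i, (z' (loE n i))^2)/2 := by
      rw [Finset.sum_add_distrib, Finset.sum_add_distrib, Finset.sum_add_distrib,
        ← Finset.sum_div, ← Finset.sum_div, ← Finset.sum_div, ← Finset.sum_div]
    rw [e]
    have b1 := sum_comp_le (2*n) n (loE n) (loE_inj n) (fun j => (z j)^2) (fun j => sq_nonneg _)
    have b2 := sum_comp_le (2*n) n (hiE n) (hiE_inj n) (fun j => (z j)^2) (fun j => sq_nonneg _)
    have b3 := sum_comp_le (2*n) n (loE n) (loE_inj n) (fun j => (z' j)^2) (fun j => sq_nonneg _)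
    have b4 := sum_comp_le (2*n) n (hiE n) (hiE_inj n) (fun j => (z' j)^2) (fun j => sq_nonneg _)
    rw [norm_sq_eq_sum, norm_sq_eq_sum]
    linarith
  linarith [mul_le_mul_of_nonneg_left (h2.trans h3) (by norm_num : (0:ℝ) ≤ 1/2)]

lemma omega_abs_le' (n : ℕ) (z z' : EuclideanSpace ℝ (Fin (2*n))) :
    |omegaH n z z'| ≤ ‖z‖ * ‖z'‖ := by
  rcases eq_or_ne z 0 with rfl | hz
  · simp [omega_zero_left]
  rcases eq_or_ne z' 0 with rfl | hz'
  · simp [omega_zero_right]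
  have hD : 0 < ‖z‖ := norm_pos_iff.mpr hz
  have hE : 0 < ‖z'‖ := norm_pos_iff.mpr hz'
  have hc0 : 0 < ‖z'‖ / ‖z‖ := div_pos hE hD
  have key := omega_abs_le n ((‖z'‖ / ‖z‖) • z) z'
  rw [omega_smul_left, abs_mul, abs_of_pos hc0, norm_smul, Real.norm_eq_abs,
    abs_of_pos hc0] at key
  have hcd : ‖z'‖ / ‖z‖ * ‖z‖ = ‖z'‖ := div_mul_cancel₀ _ hD.ne'
  rw [hcd] at key
  have h : (‖z'‖ / ‖z‖) * |omegaH n z z'| ≤ ‖z'‖^2 := by nlinarith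
  calc |omegaH n z z'| = ‖z‖ / ‖z'‖ * ((‖z'‖ / ‖z‖) * |omegaH n z z'|) := by
        field_simp
    _ ≤ ‖z‖ / ‖z'‖ * ‖z'‖^2 := by
        apply mul_le_mul_of_nonneg_left h (by positivity)
    _ = ‖z‖ * ‖z'‖ := by field_simp

lemma rpow4 (D : ℝ) (hD : 0 ≤ D) : ((D^4 : ℝ))^((1:ℝ)/4) = D := by
  rw [← Real.rpow_natCast D 4, ← Real.rpow_mul hD]
  norm_num

lemma rpow_quarter_le {A B : ℝ} (hA : 0 ≤ A) (h : A^((1:ℝ)/4) ≤ B) : A ≤ B^4 :=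
  calc A = (A^((1:ℝ)/4))^(4:ℕ) := by
        rw [← Real.rpow_natCast (A ^ ((1:ℝ)/4)) 4, ← Real.rpow_mul hA]; norm_num
  _ ≤ B^4 := pow_le_pow_left₀ (Real.rpow_nonneg hA _) h 4

lemma numeric_main (η D E t ω₀ : ℝ) (hη0 : 0 < η) (hη1 : η ≤ 1) (hD0 : 0 ≤ D) (hE0 : 0 ≤ E)
    (hA' : (D^2+E^2)^2 + 16*t^2 ≤ (1+η)^4 * D^4)
    (hω : ω₀^2 ≤ D^2 * E^2) :
    E^4 + 16*(t-ω₀)^2 ≤ 1296 * η * D^4 := by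
  have ha2 : η^2 ≤ η := by nlinarith
  have ha3 : η^3 ≤ η := by nlinarith
  have ha4 : η^4 ≤ η := by nlinarith
  have h1 : D^2 + E^2 ≤ (1+η)^2 * D^2 := by
    have hsq : (D^2 + E^2)^2 ≤ ((1+η)^2 * D^2)^2 := by nlinarith [sq_nonneg t]
    exact (pow_le_pow_iff_left₀ (by positivity) (by positivity) two_ne_zero).mp hsq
  have hE2 : E^2 ≤ 3 * η * D^2 := by nlinarith
  have ht : 16 * t^2 ≤ 15 * η * D^4 := by
    have hmono : D^4 ≤ (D^2 + E^2)^2 := by nlinarith [sq_nonneg E, sq_nonneg D]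
    nlinarith [pow_nonneg hD0 4]
  have hω2 : ω₀^2 ≤ 3 * η * D^4 := by nlinarith [sq_nonneg E, sq_nonneg D, mul_nonneg hη0.le (sq_nonneg D)]
  have hE4 : E^4 ≤ 9 * η * D^4 := by
    have h9 : E^2 * E^2 ≤ (3*η*D^2) * (3*η*D^2) :=
      mul_le_mul hE2 hE2 (sq_nonneg _) (by positivity)
    nlinarith [pow_nonneg hD0 4]
  nlinarith [sq_nonneg (t + ω₀), hE4, ht, hω2, mul_nonneg hη0.le (pow_nonneg hD0 4)]

set_option maxHeartbeats 1000000 in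
theorem graph_lip_implies_intrinsic_lip (n : ℕ)
    (K : Submodule ℝ (EuclideanSpace ℝ (Fin (2 * n))))
    (hK : IsIsotropic n K) (φ : Hpt n → Hpt n) (η : ℝ)
    (hη0 : 0 < η) (hη1 : η ≤ 1)
    (hφW : ∀ v : Hpt n, MemV K v → (φ v).1 ∈ Kᗮ)
    (hLip : ∀ v v' : Hpt n, MemV K v → MemV K v' →
      kNorm (hMul (hInv (hMul v' (φ v'))) (hMul v (φ v))) ≤
        (1 + η) * kNorm (hMul (hInv v') v)) :
    ∀ v v' : Hpt n, MemV K v → MemV K v' →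
      kNorm (PW K (hMul (hInv (hMul v' (φ v'))) (hMul v (φ v)))) ≤
        6 * η ^ ((1 : ℝ) / 4) *
          kNorm (PV K (hMul (hInv (hMul v' (φ v'))) (hMul v (φ v)))) := by
  intro v v' hv hv'
  set X := hMul (hInv (hMul v' (φ v'))) (hMul v (φ v)) with hX
  set u : EuclideanSpace ℝ (Fin (2*n)) := v.1 - v'.1 with hu_def
  set e : EuclideanSpace ℝ (Fin (2*n)) := (φ v).1 - (φ v').1 with he_def
  have hu : u ∈ K := K.sub_mem hv.1 hv'.1
  have he : e ∈ Kᗮ := Submodule.sub_mem _ (hφW v hv) (hφW v' hv')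
  have hX1 : X.1 = u + e := by
    simp only [hX, hMul, hInv, hu_def, he_def]
    abel
  -- the orthogonal projection of X.1 onto K is u
  have hproj : (K.orthogonalProjection X.1 : EuclideanSpace ℝ (Fin (2*n))) = u := by
    rw [hX1, map_add]
    push_cast
    rw [Submodule.orthogonalProjectionOnto_apply_of_mem_orthogonal he]
    simp [Submodule.starProjection_eq_self_iff.mpr hu]
  set D := ‖u‖ with hD_def
  set E := ‖e‖ with hE_def
  have hD0 : 0 ≤ D := norm_nonneg _
  have hE0 : 0 ≤ E := norm_nonneg _
  set t := X.2 with ht_def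
  set ω₀ := omegaH n u e with hω_def
  -- PV X
  have hPV : PV K X = (u, 0) := by rw [PV, hproj]
  have hPVnorm : kNorm (PV K X) = D := by
    rw [hPV, kNorm]
    simp only
    rw [show ‖u‖^4 + 16*(0:ℝ)^2 = D^4 by norm_num [hD_def]]
    exact rpow4 D hD0
  -- PW X
  have hPW : PW K X = (e, t - ω₀) := by
    rw [PW, hPV]
    simp only [hMul, hInv]
    refine Prod.ext_iff.mpr ⟨?_, ?_⟩
    · show -u + X.1 = e
      rw [hX1]; abel
    · show -0 + X.2 + omegaH n (-u) X.1 = t - ω₀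
      rw [hX1, omega_neg_left, omega_add_right, omega_self]
      ring
  -- the Lipschitz hypothesis
  have hbase : hMul (hInv v') v = (u, 0) := by
    simp only [hMul, hInv, hu_def]
    refine Prod.ext_iff.mpr ⟨?_, ?_⟩
    · show -v'.1 + v.1 = v.1 - v'.1
      abel
    · show -v'.2 + v.2 + omegaH n (-v'.1) v.1 = 0
      rw [hv.2, hv'.2, omega_neg_left, hK v'.1 hv'.1 v.1 hv.1]
      ring
  have hLip' := hLip v v' hv hv'
  rw [hbase] at hLip'
  have hbn : kNorm ((u, 0) : Hpt n) = D := by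
    rw [kNorm]
    simp only
    rw [show ‖u‖^4 + 16*(0:ℝ)^2 = D^4 by norm_num [hD_def]]
    exact rpow4 D hD0
  rw [hbn] at hLip'
  -- raise to 4th power
  have hA : ‖X.1‖^4 + 16 * t^2 ≤ ((1+η)*D)^4 := by
    refine rpow_quarter_le (by positivity) ?_
    exact hLip'
  have hns : ‖X.1‖^2 = D^2 + E^2 := by
    rw [hX1, norm_add_sq_real, Submodule.inner_right_of_mem_orthogonal hu he]
    ring
  have hA' : (D^2 + E^2)^2 + 16 * t^2 ≤ (1+η)^4 * D^4 := by
    have h4 : ‖X.1‖^4 = (‖X.1‖^2)^2 := by ring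
    rw [h4, hns] at hA
    have hexp : ((1+η)*D)^4 = (1+η)^4 * D^4 := by ring
    linarith
  have hω : ω₀^2 ≤ D^2 * E^2 := by
    have h := omega_abs_le' n u e
    calc ω₀^2 = |omegaH n u e|^2 := (sq_abs _).symm
    _ ≤ (D*E)^2 := by
        apply pow_le_pow_left₀ (abs_nonneg _) h
    _ = D^2*E^2 := by ring
  have hnum := numeric_main η D E t ω₀ hη0 hη1 hD0 hE0 hA' hω
  have hmain : E^4 + 16*(t-ω₀)^2 ≤ (6*η^((1:ℝ)/4)*D)^4 := by
    have h4 : ((η^((1:ℝ)/4)):ℝ)^(4:ℕ) = η := by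
      rw [← Real.rpow_natCast (η^((1:ℝ)/4)) 4, ← Real.rpow_mul hη0.le]
      norm_num
    have hrw : (6*η^((1:ℝ)/4)*D)^4 = 1296 * η * D^4 := by
      calc (6*η^((1:ℝ)/4)*D)^4 = 1296 * (η^((1:ℝ)/4))^(4:ℕ) * D^4 := by ring
      _ = 1296 * η * D^4 := by rw [h4]
    rw [hrw]
    exact hnum
  -- conclude
  rw [hPVnorm, hPW]
  have hkw : kNorm ((e, t - ω₀) : Hpt n) = (E^4 + 16*(t-ω₀)^2)^((1:ℝ)/4) := by
    rw [kNorm]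
  rw [hkw]
  calc (E^4 + 16*(t-ω₀)^2)^((1:ℝ)/4)
      ≤ ((6 * η^((1:ℝ)/4) * D)^4)^((1:ℝ)/4) := by
        apply Real.rpow_le_rpow (by positivity) hmain (by norm_num)
    _ = 6 * η^((1:ℝ)/4) * D := rpow4 _ (by positivity)
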